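/- Let α ∈ R⁺ and let β ∈ Δ(α) be such that (α,β) < 0 and n_β(α) = 1. Then there exists α' ∈ R⁺ such that α' ≤ α, (α',β) > 0, and (α,α') = 0. -/

import Mathlib

/- Setting: a reduced, irreducible, crystallographic, simply laced root system `roots`
in a real inner product space `V`, with a fixed base `base` of simple roots,
its Weyl group (generated by the reflections in the simple roots), the length
function, the (strong) Bruhat order, the weak left Bruhat order, the sets
`A_ℓ(v)`, `A(v)`, `D(w)`, `AD(v,w)`, and the partial order on roots induced
by the base. -/

open scoped InnerProductSpace Classical

noncomputable section

variable {V : Type*} [NormedAddCommGroup V] [InnerProductSpace ℝ V]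

/-- The underlying linear map of the reflection `s_α : x ↦ x - (2⟪x,α⟫/⟪α,α⟫) α`. -/
def reflMap (α : V) : V →ₗ[ℝ] V where
  toFun x := x - (2 * ⟪x, α⟫_ℝ / ⟪α, α⟫_ℝ) • α
  map_add' x y := by
    simp only [inner_add_left]
    rw [show 2 * (⟪x, α⟫_ℝ + ⟪y, α⟫_ℝ) / ⟪α, α⟫_ℝ
        = 2 * ⟪x, α⟫_ℝ / ⟪α, α⟫_ℝ + 2 * ⟪y, α⟫_ℝ / ⟪α, α⟫_ℝ by ring]
    rw [add_smul]
    abel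
  map_smul' c x := by
    simp only [real_inner_smul_left, RingHom.id_apply, smul_sub, smul_smul]
    rw [show 2 * (c * ⟪x, α⟫_ℝ) / ⟪α, α⟫_ℝ = c * (2 * ⟪x, α⟫_ℝ / ⟪α, α⟫_ℝ) by ring]

theorem reflMap_involutive (α : V) : Function.Involutive (reflMap α) := by
  intro x
  by_cases h : (⟪α, α⟫_ℝ) = (0 : ℝ)
  · have hα : α = 0 := inner_self_eq_zero.mp h
    simp [reflMap, hα]
  · show reflMap α (x - (2 * ⟪x, α⟫_ℝ / ⟪α, α⟫_ℝ) • α) = x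
    show (x - (2 * ⟪x, α⟫_ℝ / ⟪α, α⟫_ℝ) • α)
        - (2 * ⟪x - (2 * ⟪x, α⟫_ℝ / ⟪α, α⟫_ℝ) • α, α⟫_ℝ / ⟪α, α⟫_ℝ) • α = x
    have h1 : ⟪x - (2 * ⟪x, α⟫_ℝ / ⟪α, α⟫_ℝ) • α, α⟫_ℝ = -⟪x, α⟫_ℝ := by
      rw [inner_sub_left, real_inner_smul_left]
      field_simp
      ring
    rw [h1, show 2 * -⟪x, α⟫_ℝ / ⟪α, α⟫_ℝ = -(2 * ⟪x, α⟫_ℝ / ⟪α, α⟫_ℝ) by ring,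
      neg_smul, sub_neg_eq_add, sub_add_cancel]

/-- The reflection `s_α` in the hyperplane orthogonal to `α`,
as a linear automorphism of `V`. -/
def sRefl (α : V) : V ≃ₗ[ℝ] V := LinearEquiv.ofInvolutive (reflMap α) (reflMap_involutive α)

/-- A reduced, irreducible, crystallographic, simply laced root system in the real
inner product space `V`, together with a choice of base (system of simple roots)
and the corresponding coordinate function `coeff α β = n_β(α)`. -/
structure SimplyLacedRootSystem (V : Type*) [NormedAddCommGroup V]
    [InnerProductSpace ℝ V] : Type _ where
  /-- the set `R` of roots -/
  roots : Set V
  /-- the base `Δ` of simple roots -/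
  base : Finset V
  finite : roots.Finite
  nonzero : ∀ α ∈ roots, α ≠ 0
  span_eq_top : Submodule.span ℝ roots = ⊤
  /-- the root system is reduced -/
  reduced : ∀ α ∈ roots, ∀ t : ℝ, t • α ∈ roots → t = 1 ∨ t = -1
  /-- the root system is crystallographic: all `⟨γ,α⟩ = 2(γ,α)/(α,α)` are integers -/
  crystallographic : ∀ α ∈ roots, ∀ γ ∈ roots, ∃ n : ℤ, 2 * ⟪γ, α⟫_ℝ / ⟪α, α⟫_ℝ = (n : ℝ)
  reflect_mem : ∀ α ∈ roots, ∀ γ ∈ roots, sRefl α γ ∈ roots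
  /-- the root system is simply laced: all roots have the same length -/
  simplyLaced : ∀ α ∈ roots, ∀ γ ∈ roots, ⟪α, α⟫_ℝ = ⟪γ, γ⟫_ℝ
  /-- the root system is irreducible -/
  irreducible : ∀ R₁ R₂ : Set V, R₁ ∪ R₂ = roots →
    (∀ α ∈ R₁, ∀ γ ∈ R₂, ⟪α, γ⟫_ℝ = 0) → R₁ = ∅ ∨ R₂ = ∅
  base_subset : ↑base ⊆ roots
  base_indep : LinearIndependent ℝ (Subtype.val : {x : V // x ∈ base} → V)
  /-- `coeff α β` is the coefficient `n_β(α)` of the simple root `β` in `α` -/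
  coeff : V → V → ℝ
  coeff_spec : ∀ α ∈ roots, α = ∑ β ∈ base, coeff α β • β
  coeff_int : ∀ α ∈ roots, ∀ β ∈ base, ∃ n : ℤ, coeff α β = (n : ℝ)
  coeff_sign : ∀ α ∈ roots, (∀ β ∈ base, 0 ≤ coeff α β) ∨ (∀ β ∈ base, coeff α β ≤ 0)

namespace SimplyLacedRootSystem

variable (P : SimplyLacedRootSystem V)

/-- The set `R⁺` of positive roots. -/
def pos : Set V := {α ∈ P.roots | ∀ β ∈ P.base, 0 ≤ P.coeff α β}

/-- The support `Δ(α) = {β ∈ Δ : n_β(α) > 0}` of a (positive) root `α`. -/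
def support (α : V) : Finset V := P.base.filter (fun β => 0 < P.coeff α β)

/-- `N⁺(α,β) = {β' ∈ Δ(α) : (β,β') < 0 and (α,β') > 0}`. -/
def Nplus (α β : V) : Finset V :=
  (P.support α).filter (fun β' => ⟪β, β'⟫_ℝ < 0 ∧ 0 < ⟪α, β'⟫_ℝ)

/-- `N⁻(α,β) = {β' ∈ Δ(α) : (β,β') < 0 and (α,β') ≤ 0}`. -/
def Nminus (α β : V) : Finset V :=
  (P.support α).filter (fun β' => ⟪β, β'⟫_ℝ < 0 ∧ ⟪α, β'⟫_ℝ ≤ 0)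

/-- The partial order on `V` induced by the base: `x ≤ y` iff `y - x` is a
nonnegative linear combination of the simple roots. -/
def rle (x y : V) : Prop :=
  ∃ c : V → ℝ, (∀ β, 0 ≤ c β) ∧ y - x = ∑ β ∈ P.base, c β • β

/-- The strict version of the partial order `rle` on roots. -/
def rlt (x y : V) : Prop := P.rle x y ∧ x ≠ y

/-- `α` is a minimal element of the set `S` with respect to the partial order on roots. -/
def IsMinimalIn (α : V) (S : Set V) : Prop := α ∈ S ∧ ∀ γ ∈ S, ¬ P.rlt γ α

/-- The Weyl group `W`, i.e. the subgroup of `GL(V)` generated by the reflections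
in the simple roots (equivalently, by all the reflections `s_α`, `α ∈ R`). -/
def weyl : Subgroup (V ≃ₗ[ℝ] V) := Subgroup.closure (sRefl '' ↑P.base)

/-- The length function `ℓ` of `W` with respect to the simple reflections. -/
def len (w : V ≃ₗ[ℝ] V) : ℕ :=
  sInf {n | ∃ l : List V, l.length = n ∧ (∀ β ∈ l, β ∈ P.base) ∧ (l.map sRefl).prod = w}

/-- One step in the Bruhat order: multiplication by the reflection of a positive
root which increases the length. -/
def bStep (u w : V ≃ₗ[ℝ] V) : Prop :=
  ∃ α ∈ P.pos, w = sRefl α * u ∧ P.len u < P.len w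

/-- The (strong) Bruhat order `≤` on `W`. -/
def ble : (V ≃ₗ[ℝ] V) → (V ≃ₗ[ℝ] V) → Prop := Relation.ReflTransGen P.bStep

/-- The strict (strong) Bruhat order `<` on `W`. -/
def blt (u w : V ≃ₗ[ℝ] V) : Prop := P.ble u w ∧ u ≠ w

/-- The covering relation `⋖` of the Bruhat order. -/
def bcov (u w : V ≃ₗ[ℝ] V) : Prop := P.blt u w ∧ P.len w = P.len u + 1

/-- One step in the weak left Bruhat order. -/
def wlStep (u w : V ≃ₗ[ℝ] V) : Prop :=
  ∃ β ∈ P.base, w = sRefl β * u ∧ P.len u < P.len w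

/-- The weak left Bruhat order `≤_ℓ` on `W`. -/
def wle : (V ≃ₗ[ℝ] V) → (V ≃ₗ[ℝ] V) → Prop := Relation.ReflTransGen P.wlStep

/-- `A_ℓ(v) = {β ∈ Δ : v < s_β v}`. -/
def Al (v : V ≃ₗ[ℝ] V) : Set V := {β : V | β ∈ P.base ∧ P.blt v (sRefl β * v)}

/-- `A(v) = {α ∈ R⁺ : v⁻¹(α) > 0}`. -/
def A (v : V ≃ₗ[ℝ] V) : Set V := {α ∈ P.pos | v⁻¹ α ∈ P.pos}

/-- `D(w) = {α ∈ R⁺ : w⁻¹(α) < 0}`. -/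
def Dset (w : V ≃ₗ[ℝ] V) : Set V := {α ∈ P.pos | -(w⁻¹ α) ∈ P.pos}

/-- `AD(v,w) = A(v) ∩ D(w)`. -/
def ADset (v w : V ≃ₗ[ℝ] V) : Set V := P.A v ∩ P.Dset w

end SimplyLacedRootSystem

/-! Induction on the height of `α`. If `β` has a neighbour `β'` in `Δ(α)` with `(α, β') > 0`,
then `α' = β + β'` works. Otherwise, since `(α, α) > 0`, some simple `γ ∈ Δ(α)` has
`(α, γ) > 0`; then `γ ⊥ β`, and `α - γ` is a positive root of smaller height satisfying the same
hypotheses. A solution `α'` for `α - γ` gives one for `α`: `α' + γ`, `α'` or `α' - γ`, according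
as `(α', γ)` is negative, zero or positive. -/

namespace SimplyLacedRootSystem

variable (P : SimplyLacedRootSystem V)

lemma inner_self_pos {α : V} (hα : α ∈ P.roots) : 0 < ⟪α, α⟫_ℝ :=
  real_inner_self_pos.mpr (P.nonzero α hα)

lemma inner_eq_half_of_pos {α γ : V} (hα : α ∈ P.roots) (hγ : γ ∈ P.roots)
    (hpos : 0 < ⟪α, γ⟫_ℝ) (hne : α ≠ γ) : ⟪α, γ⟫_ℝ = ⟪γ, γ⟫_ℝ / 2 := by
  have hL := P.inner_self_pos hγ
  obtain ⟨m, hm⟩ := P.crystallographic γ hγ α hα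
  have hval : 2 * ⟪α, γ⟫_ℝ = m * ⟪γ, γ⟫_ℝ := by
    rw [div_eq_iff hL.ne'] at hm
    exact hm
  have hdist : ⟪α - γ, α - γ⟫_ℝ = (2 - m) * ⟪γ, γ⟫_ℝ := by
    rw [inner_sub_sub_self, real_inner_comm α γ, P.simplyLaced α hα γ hγ]
    linarith
  have hm_pos : (0 : ℝ) < m := pos_of_mul_pos_left (by linarith) hL.le
  have hm_lt : (m : ℝ) < 2 := by
    by_contra! h
    have hzero : ⟪α - γ, α - γ⟫_ℝ = 0 :=
      le_antisymm (hdist ▸ mul_nonpos_of_nonpos_of_nonneg (by linarith) hL.le)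
        real_inner_self_nonneg
    exact hne (sub_eq_zero.mp (inner_self_eq_zero.mp hzero))
  have hm_one : m = 1 := by
    have : 0 < m := by exact_mod_cast hm_pos
    have : m < 2 := by exact_mod_cast hm_lt
    omega
  rw [hm_one, Int.cast_one, one_mul] at hval
  linarith

lemma neg_mem_roots {α : V} (hα : α ∈ P.roots) : -α ∈ P.roots := by
  have h := P.reflect_mem α hα α hα
  rwa [show sRefl α α = -α by
    change α - (2 * ⟪α, α⟫_ℝ / ⟪α, α⟫_ℝ) • α = -α
    rw [mul_div_assoc, div_self (P.inner_self_pos hα).ne', mul_one, two_smul]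
    abel] at h

lemma inner_eq_neg_half_of_neg {α γ : V} (hα : α ∈ P.roots) (hγ : γ ∈ P.roots)
    (hneg : ⟪α, γ⟫_ℝ < 0) (hne : α ≠ -γ) : ⟪α, γ⟫_ℝ = -(⟪γ, γ⟫_ℝ / 2) := by
  have h := P.inner_eq_half_of_pos (P.neg_mem_roots hα) hγ (by rwa [inner_neg_left, neg_pos])
    (fun h => hne (neg_eq_iff_eq_neg.mp h))
  rw [inner_neg_left] at h
  linarith

lemma sub_mem_roots_of_inner_pos {α γ : V} (hα : α ∈ P.roots) (hγ : γ ∈ P.roots)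
    (hpos : 0 < ⟪α, γ⟫_ℝ) (hne : α ≠ γ) : α - γ ∈ P.roots := by
  have h := P.reflect_mem γ hγ α hα
  rwa [show sRefl γ α = α - γ by
    change α - (2 * ⟪α, γ⟫_ℝ / ⟪γ, γ⟫_ℝ) • γ = α - γ
    rw [P.inner_eq_half_of_pos hα hγ hpos hne, mul_div_cancel₀ _ two_ne_zero,
      div_self (P.inner_self_pos hγ).ne', one_smul]] at h

lemma add_mem_roots_of_inner_neg {α γ : V} (hα : α ∈ P.roots) (hγ : γ ∈ P.roots)
    (hneg : ⟪α, γ⟫_ℝ < 0) (hne : α ≠ -γ) : α + γ ∈ P.roots := by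
  simpa only [sub_neg_eq_add] using P.sub_mem_roots_of_inner_pos hα (P.neg_mem_roots hγ)
    (by rwa [inner_neg_right, neg_pos]) hne

lemma coeff_eq_of_eq_sum {α : V} (hα : α ∈ P.roots) (c : V → ℝ)
    (h : α = ∑ δ ∈ P.base, c δ • δ) {δ : V} (hδ : δ ∈ P.base) : P.coeff α δ = c δ := by
  have hzero : ∑ x : P.base, (P.coeff α x - c x) • (x : V) = 0 := by
    rw [Finset.sum_coe_sort P.base fun δ => (P.coeff α δ - c δ) • δ]
    simp only [sub_smul, Finset.sum_sub_distrib]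
    rw [← P.coeff_spec α hα, ← h, sub_self]
  exact sub_eq_zero.mp (Fintype.linearIndependent_iff.mp P.base_indep _ hzero ⟨δ, hδ⟩)

lemma coeff_sub {α γ : V} (hα : α ∈ P.roots) (hγ : γ ∈ P.roots) (hαγ : α - γ ∈ P.roots)
    {δ : V} (hδ : δ ∈ P.base) : P.coeff (α - γ) δ = P.coeff α δ - P.coeff γ δ :=
  P.coeff_eq_of_eq_sum hαγ (fun δ => P.coeff α δ - P.coeff γ δ) (by
    simp only [sub_smul, Finset.sum_sub_distrib, ← P.coeff_spec α hα, ← P.coeff_spec γ hγ]) hδ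

lemma coeff_add {α γ : V} (hα : α ∈ P.roots) (hγ : γ ∈ P.roots) (hαγ : α + γ ∈ P.roots)
    {δ : V} (hδ : δ ∈ P.base) : P.coeff (α + γ) δ = P.coeff α δ + P.coeff γ δ := by
  have h := P.coeff_sub hαγ hγ (by rwa [add_sub_cancel_right]) hδ
  rw [add_sub_cancel_right] at h
  linarith

lemma sum_ite_eq_smul_self {γ : V} (hγ : γ ∈ P.base) :
    ∑ δ ∈ P.base, (if δ = γ then (1 : ℝ) else 0) • δ = γ := by
  simp [ite_smul, hγ]

lemma coeff_base {γ δ : V} (hγ : γ ∈ P.base) (hδ : δ ∈ P.base) :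
    P.coeff γ δ = if δ = γ then 1 else 0 :=
  P.coeff_eq_of_eq_sum (P.base_subset hγ) _ (P.sum_ite_eq_smul_self hγ).symm hδ

lemma one_le_coeff {α δ : V} (hα : α ∈ P.roots) (hδ : δ ∈ P.base)
    (h : 0 < P.coeff α δ) : 1 ≤ P.coeff α δ := by
  obtain ⟨m, hm⟩ := P.coeff_int α hα δ hδ
  rw [hm] at h ⊢
  exact_mod_cast (Int.cast_pos.mp h : 0 < m)

lemma mem_pos_of_coeff_pos {α δ : V} (hα : α ∈ P.roots) (hδ : δ ∈ P.base)
    (h : 0 < P.coeff α δ) : α ∈ P.pos := by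
  refine ⟨hα, (P.coeff_sign α hα).resolve_right fun hneg => ?_⟩
  exact (hneg δ hδ).not_gt h

lemma base_subset_pos {γ : V} (hγ : γ ∈ P.base) : γ ∈ P.pos :=
  P.mem_pos_of_coeff_pos (P.base_subset hγ) hγ (by simp [P.coeff_base hγ hγ])

lemma neg_notMem_pos {α : V} (hα : α ∈ P.pos) : -α ∉ P.pos := by
  intro hneg
  have hzero : ∀ δ ∈ P.base, P.coeff α δ = 0 := fun δ hδ => by
    have h := P.coeff_eq_of_eq_sum hneg.1 (fun δ => -P.coeff α δ)
      (by simp only [neg_smul, Finset.sum_neg_distrib, ← P.coeff_spec α hα.1]) hδ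
    linarith [hα.2 δ hδ, hneg.2 δ hδ]
  apply P.nonzero α hα.1
  rw [P.coeff_spec α hα.1]
  exact Finset.sum_eq_zero fun δ hδ => by rw [hzero δ hδ, zero_smul]

lemma inner_base_nonpos {β γ : V} (hβ : β ∈ P.base) (hγ : γ ∈ P.base) (hne : β ≠ γ) :
    ⟪β, γ⟫_ℝ ≤ 0 := by
  by_contra! hpos
  have hβγ := P.sub_mem_roots_of_inner_pos (P.base_subset hβ) (P.base_subset hγ) hpos hne
  have hcoeff : ∀ δ ∈ P.base,
      P.coeff (β - γ) δ = (if δ = β then 1 else 0) - (if δ = γ then 1 else 0) := fun δ hδ => by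
    rw [P.coeff_sub (P.base_subset hβ) (P.base_subset hγ) hβγ hδ, P.coeff_base hβ hδ,
      P.coeff_base hγ hδ]
  rcases P.coeff_sign _ hβγ with h | h
  · have := h γ hγ
    norm_num [hcoeff γ hγ, Ne.symm hne] at this
  · have := h β hβ
    norm_num [hcoeff β hβ, hne] at this

lemma sub_base_mem_pos {α γ : V} (hα : α ∈ P.pos) (hγ : γ ∈ P.base)
    (hαγ : α - γ ∈ P.roots) (hne : α ≠ γ) : α - γ ∈ P.pos := by
  refine ⟨hαγ, (P.coeff_sign _ hαγ).resolve_right fun hnonpos => ?_⟩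
  have hzero : ∀ δ ∈ P.base, δ ≠ γ → P.coeff α δ = 0 := fun δ hδ hδγ => by
    have h := hnonpos δ hδ
    rw [P.coeff_sub hα.1 (P.base_subset hγ) hαγ hδ, P.coeff_base hγ hδ, if_neg hδγ] at h
    linarith [hα.2 δ hδ]
  have hsmul : α = P.coeff α γ • γ := by
    conv_lhs => rw [P.coeff_spec α hα.1]
    exact Finset.sum_eq_single_of_mem γ hγ fun δ hδ hδγ => by rw [hzero δ hδ hδγ, zero_smul]
  rcases P.reduced γ (P.base_subset hγ) _ (hsmul ▸ hα.1) with h | h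
  · exact hne (by rw [hsmul, h, one_smul])
  · linarith [hα.2 γ hγ]

lemma add_base_mem_pos {α γ : V} (hα : α ∈ P.pos) (hγ : γ ∈ P.base)
    (hαγ : α + γ ∈ P.roots) : α + γ ∈ P.pos := by
  refine P.mem_pos_of_coeff_pos hαγ hγ ?_
  rw [P.coeff_add hα.1 (P.base_subset hγ) hαγ hγ, P.coeff_base hγ hγ, if_pos rfl]
  linarith [hα.2 γ hγ]

lemma rle_trans {x y z : V} (hxy : P.rle x y) (hyz : P.rle y z) : P.rle x z := by
  obtain ⟨c, hc, hxy⟩ := hxy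
  obtain ⟨d, hd, hyz⟩ := hyz
  refine ⟨c + d, fun δ => add_nonneg (hc δ) (hd δ), ?_⟩
  simp only [Pi.add_apply, add_smul, Finset.sum_add_distrib, ← hxy, ← hyz]
  abel

lemma rle_add_right {x y : V} (h : P.rle x y) (z : V) : P.rle (x + z) (y + z) := by
  simpa only [rle, add_sub_add_right_eq_sub] using h

lemma rle_sub_base (x : V) {γ : V} (hγ : γ ∈ P.base) : P.rle (x - γ) x :=
  ⟨fun δ => if δ = γ then 1 else 0, fun _ => ite_nonneg zero_le_one le_rfl,
    by rw [sub_sub_cancel, P.sum_ite_eq_smul_self hγ]⟩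

lemma rle_of_coeff_le {x y : V} (hx : x ∈ P.roots) (hy : y ∈ P.roots)
    (h : ∀ δ ∈ P.base, P.coeff x δ ≤ P.coeff y δ) : P.rle x y := by
  refine ⟨fun δ => if δ ∈ P.base then P.coeff y δ - P.coeff x δ else 0,
    fun δ => ?_, ?_⟩
  · dsimp only
    split_ifs with hδ
    · linarith [h δ hδ]
    · exact le_rfl
  have hdiff : y - x = ∑ δ ∈ P.base, (P.coeff y δ - P.coeff x δ) • δ := by
    simp only [sub_smul, Finset.sum_sub_distrib, ← P.coeff_spec x hx, ← P.coeff_spec y hy]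
  rw [hdiff]
  exact Finset.sum_congr rfl fun δ hδ => by simp only [if_pos hδ]

def height (α : V) : ℝ := ∑ δ ∈ P.base, P.coeff α δ

lemma coeff_le_height {α δ : V} (hα : α ∈ P.pos) (hδ : δ ∈ P.base) :
    P.coeff α δ ≤ P.height α :=
  Finset.single_le_sum hα.2 hδ

lemma height_sub_base {α γ : V} (hα : α ∈ P.roots) (hγ : γ ∈ P.base)
    (hαγ : α - γ ∈ P.roots) : P.height (α - γ) = P.height α - 1 := by
  rw [height, Finset.sum_congr rfl fun δ hδ => by
    rw [P.coeff_sub hα (P.base_subset hγ) hαγ hδ, P.coeff_base hγ hδ]]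
  simp [height, Finset.sum_sub_distrib, hγ]

lemma exists_orthogonal_of_neighbour {α β β' : V} (hα : α ∈ P.pos) (hβ : β ∈ P.base)
    (hβ' : β' ∈ P.base) (hneg : ⟪α, β⟫_ℝ < 0) (hone : P.coeff α β = 1)
    (hcoeff : 0 < P.coeff α β') (hββ' : ⟪β, β'⟫_ℝ < 0) (hαβ' : 0 < ⟪α, β'⟫_ℝ) :
    ∃ α' ∈ P.pos, P.rle α' α ∧ 0 < ⟪α', β⟫_ℝ ∧ ⟪α, α'⟫_ℝ = 0 := by
  have hβr := P.base_subset hβ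
  have hβ'r := P.base_subset hβ'
  have hlen : ⟪β', β'⟫_ℝ = ⟪β, β⟫_ℝ := P.simplyLaced β' hβ'r β hβr
  have hne : β ≠ β' := fun h => by linarith [P.inner_self_pos hβr, h ▸ hββ']
  have hne_neg : β ≠ -β' := fun h =>
    P.neg_notMem_pos (P.base_subset_pos hβ') (h ▸ P.base_subset_pos hβ)
  have hββ'_val := P.inner_eq_neg_half_of_neg hβr hβ'r hββ' hne_neg
  have hαβ_val := P.inner_eq_neg_half_of_neg hα.1 hβr hneg
    fun h => P.neg_notMem_pos (P.base_subset_pos hβ) (h ▸ hα)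
  have hαβ'_val := P.inner_eq_half_of_pos hα.1 hβ'r hαβ' fun h => by
    rw [h, P.coeff_base hβ' hβ, if_neg hne] at hone
    exact zero_ne_one hone
  have hsum := P.add_mem_roots_of_inner_neg hβr hβ'r hββ' hne_neg
  refine ⟨β + β', P.add_base_mem_pos (P.base_subset_pos hβ) hβ' hsum, ?_, ?_, ?_⟩
  · refine P.rle_of_coeff_le hsum hα.1 fun δ hδ => ?_
    rw [P.coeff_add hβr hβ'r hsum hδ, P.coeff_base hβ hδ, P.coeff_base hβ' hδ]
    by_cases hδβ : δ = β
    · subst hδβ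
      simp [hne, hone]
    by_cases hδβ' : δ = β'
    · subst hδβ'
      simpa [hδβ] using P.one_le_coeff hα.1 hδ hcoeff
    simpa [hδβ, hδβ'] using hα.2 δ hδ
  · rw [inner_add_left, real_inner_comm β β']
    linarith [P.inner_self_pos hβr]
  · rw [inner_add_right]
    linarith

lemma exists_orthogonal_of_sub_base {α β γ α' : V} (hγ : γ ∈ P.base)
    (hβγ : ⟪γ, β⟫_ℝ = 0) (hαγ : ⟪α, γ⟫_ℝ = ⟪γ, γ⟫_ℝ / 2)
    (hα' : α' ∈ P.pos) (hle : P.rle α' (α - γ)) (hα'β : 0 < ⟪α', β⟫_ℝ)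
    (horth : ⟪α - γ, α'⟫_ℝ = 0) :
    ∃ α'' ∈ P.pos, P.rle α'' α ∧ 0 < ⟪α'', β⟫_ℝ ∧ ⟪α, α''⟫_ℝ = 0 := by
  have hγr := P.base_subset hγ
  have hαα' : ⟪α, α'⟫_ℝ = ⟪α', γ⟫_ℝ := by
    rwa [inner_sub_left, sub_eq_zero, real_inner_comm α' γ] at horth
  have hα'_le : P.rle α' α := P.rle_trans hle (P.rle_sub_base α hγ)
  have hne : α' ≠ γ := fun h => by rw [h, hβγ] at hα'β; exact lt_irrefl 0 hα'β
  have hne_neg : α' ≠ -γ := fun h => by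
    rw [h, inner_neg_left, hβγ, neg_zero] at hα'β; exact lt_irrefl 0 hα'β
  rcases lt_trichotomy ⟪α', γ⟫_ℝ 0 with hneg | hzero | hpos
  · have hsum := P.add_mem_roots_of_inner_neg hα'.1 hγr hneg hne_neg
    refine ⟨α' + γ, P.add_base_mem_pos hα' hγ hsum, ?_, ?_, ?_⟩
    · simpa only [sub_add_cancel] using P.rle_add_right hle γ
    · rwa [inner_add_left, hβγ, add_zero]
    · rw [inner_add_right, hαα', P.inner_eq_neg_half_of_neg hα'.1 hγr hneg hne_neg, hαγ]
      ring
  · exact ⟨α', hα', hα'_le, hα'β, hαα'.trans hzero⟩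
  · have hdiff := P.sub_mem_roots_of_inner_pos hα'.1 hγr hpos hne
    refine ⟨α' - γ, P.sub_base_mem_pos hα' hγ hdiff hne, ?_, ?_, ?_⟩
    · exact P.rle_trans (P.rle_sub_base α' hγ) hα'_le
    · rwa [inner_sub_left, hβγ, sub_zero]
    · rw [inner_sub_right, hαα', P.inner_eq_half_of_pos hα'.1 hγr hpos hne, hαγ, sub_self]

lemma exists_coeff_pos_inner_pos {α : V} (hα : α ∈ P.pos) :
    ∃ γ ∈ P.base, 0 < P.coeff α γ ∧ 0 < ⟪α, γ⟫_ℝ := by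
  have hexpand : ⟪α, α⟫_ℝ = ∑ δ ∈ P.base, P.coeff α δ * ⟪α, δ⟫_ℝ := by
    nth_rw 2 [P.coeff_spec α hα.1]
    simp only [inner_sum, real_inner_smul_right]
  obtain ⟨γ, hγ, hterm⟩ : ∃ γ ∈ P.base, 0 < P.coeff α γ * ⟪α, γ⟫_ℝ := by
    by_contra! h
    linarith [Finset.sum_nonpos h, P.inner_self_pos hα.1]
  exact ⟨γ, hγ, (pos_and_pos_or_neg_and_neg_of_mul_pos hterm).resolve_right
    fun h => (hα.2 γ hγ).not_gt h.1⟩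

lemma exists_orthogonal_of_height_le (n : ℕ) {α β : V} (hα : α ∈ P.pos)
    (hheight : P.height α ≤ n) (hβ : β ∈ P.base) (hneg : ⟪α, β⟫_ℝ < 0)
    (hone : P.coeff α β = 1) :
    ∃ α' ∈ P.pos, P.rle α' α ∧ 0 < ⟪α', β⟫_ℝ ∧ ⟪α, α'⟫_ℝ = 0 := by
  induction n generalizing α with
  | zero =>
    have := P.coeff_le_height hα hβ
    norm_num at hheight
    linarith
  | succ n ih =>
    by_cases hneighbour : ∃ β' ∈ P.base, 0 < P.coeff α β' ∧ ⟪β, β'⟫_ℝ < 0 ∧ 0 < ⟪α, β'⟫_ℝ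
    · obtain ⟨β', hβ', hcoeff, hββ', hαβ'⟩ := hneighbour
      exact P.exists_orthogonal_of_neighbour hα hβ hβ' hneg hone hcoeff hββ' hαβ'
    push Not at hneighbour
    obtain ⟨γ, hγ, hcoeff, hαγ⟩ := P.exists_coeff_pos_inner_pos hα
    have hγβ : γ ≠ β := fun h => by rw [h] at hαγ; linarith
    have hβγ : ⟪γ, β⟫_ℝ = 0 := by
      refine le_antisymm (P.inner_base_nonpos hγ hβ hγβ) (not_lt.mp fun h => ?_)
      exact (hneighbour γ hγ hcoeff (by rwa [real_inner_comm])).not_gt hαγ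
    have hαγ_ne : α ≠ γ := fun h => by rw [h, hβγ] at hneg; exact lt_irrefl 0 hneg
    have hdiff := P.sub_mem_roots_of_inner_pos hα.1 (P.base_subset hγ) hαγ hαγ_ne
    have hone' : P.coeff (α - γ) β = 1 := by
      rw [P.coeff_sub hα.1 (P.base_subset hγ) hdiff hβ, P.coeff_base hγ hβ, if_neg hγβ.symm,
        hone, sub_zero]
    obtain ⟨α', hα', hle, hα'β, horth⟩ := ih
      (P.mem_pos_of_coeff_pos hdiff hβ (hone' ▸ one_pos))
      (by rw [P.height_sub_base hα.1 hγ hdiff]; push_cast at hheight; linarith)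
      (by rwa [inner_sub_left, hβγ, sub_zero]) hone'
    exact P.exists_orthogonal_of_sub_base hγ hβγ
      (P.inner_eq_half_of_pos hα.1 (P.base_subset hγ) hαγ hαγ_ne) hα' hle hα'β horth

end SimplyLacedRootSystem

/-- Let α ∈ R⁺ and let β ∈ Δ(α) be such that (α,β) < 0 and n_β(α) = 1.
Then there exists α' ∈ R⁺ such that α' ≤ α, (α',β) > 0, and (α,α') = 0. -/
theorem stmt10 (P : SimplyLacedRootSystem V) (α : V) (hα : α ∈ P.pos)
    (β : V) (hβ : β ∈ P.support α) (hneg : ⟪α, β⟫_ℝ < 0) (hone : P.coeff α β = 1) :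
    ∃ α' ∈ P.pos, P.rle α' α ∧ 0 < ⟪α', β⟫_ℝ ∧ ⟪α, α'⟫_ℝ = 0 :=
  P.exists_orthogonal_of_height_le ⌈P.height α⌉₊ hα (Nat.le_ceil _)
    (Finset.mem_filter.mp hβ).1 hneg hone
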